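/- arXiv:0705.0936 — 2 statements merged into one kernel-verified Lean document; each statement's English description precedes it below -/
import Mathlib

section
/- For fixed χ > 1, the function λ ↦ ν₀(χ,λ) = (χ + χ^λ − 2χ^{1+λ})/(χ − χ^{1+λ}) is strictly decreasing on (0,1]. -/
open Real Set

/-! With `t = χ ^ λ` the quotient is the Möbius function `2 - χ⁻¹ + (1 - χ⁻¹) / (t - 1)`, which
decreases in `t > 1` because `1 - χ⁻¹ > 0`; and `t = χ ^ λ` increases in `λ` for `χ > 1`. -/

lemma nuZero_eq_two_sub_inv_add_div {χ l : ℝ} (hχ : χ ≠ 0) (hl : χ ^ l ≠ 1) :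
    (χ + χ ^ l - 2 * χ ^ (1 + l)) / (χ - χ ^ (1 + l))
      = 2 - χ⁻¹ + (1 - χ⁻¹) / (χ ^ l - 1) := by
  have ht : χ ^ l - 1 ≠ 0 := sub_ne_zero.mpr hl
  have hden : χ - χ ^ l * χ ≠ 0 := by
    rw [show χ - χ ^ l * χ = -(χ * (χ ^ l - 1)) by ring]
    exact neg_ne_zero.mpr (mul_ne_zero hχ ht)
  rw [add_comm 1 l, rpow_add_one hχ]
  field_simp
  ring

/-- For fixed χ > 1, λ ↦ ν₀(χ,λ) = (χ + χ^λ − 2χ^{1+λ})/(χ − χ^{1+λ}) is strictly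
    decreasing on (0,1]. -/
theorem nuZero_strictAnti (χ : ℝ) (hχ : 1 < χ) :
    StrictAntiOn (fun lam : ℝ =>
      (χ + χ ^ lam - 2 * χ ^ (1 + lam)) / (χ - χ ^ (1 + lam))) (Ioc 0 1) := by
  intro a ha b hb hab
  have hχ0 : χ ≠ 0 := (zero_lt_one.trans hχ).ne'
  have ha1 : 1 < χ ^ a := one_lt_rpow hχ ha.1
  have hb1 : 1 < χ ^ b := one_lt_rpow hχ hb.1
  have hpow : χ ^ a < χ ^ b := rpow_lt_rpow_of_exponent_lt hχ hab
  have hcoef : 0 < 1 - χ⁻¹ := sub_pos.mpr (inv_lt_one_of_one_lt₀ hχ)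
  simp only [nuZero_eq_two_sub_inv_add_div hχ0 ha1.ne', nuZero_eq_two_sub_inv_add_div hχ0 hb1.ne']
  gcongr
end

section
/- For χ > 1 and λ ∈ (0,1], ν₀(χ,λ) − ν₅(χ,λ,1) > 0, i.e., the CDMA self-interference coefficient strictly exceeds the IR-UWB coefficient at ρ = 1 (so Δν > 0 and the loss Ψ is strictly positive). -/
open Real

/-- For y > 1, `1 - 1/y < log y`. -/
lemma one_sub_inv_lt_log' {y : ℝ} (hy : 1 < y) : 1 - 1/y < Real.log y := by
  have hy0 : (0:ℝ) < y := lt_trans one_pos hy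
  have h1 : Real.log y⁻¹ < y⁻¹ - 1 :=
    Real.log_lt_sub_one_of_pos (by positivity) (by
      intro h
      have : y = 1 := by field_simp at h; linarith
      linarith)
  rw [Real.log_inv] at h1
  rw [one_div]
  linarith

/-- Padé bound: for x > 1, `2(x-1)/(x+1) < log x`. -/
lemma pade_log {x : ℝ} (hx : 1 < x) : 2*(x-1)/(x+1) < Real.log x := by
  have hx1 : (0:ℝ) < x + 1 := by linarith
  rw [div_lt_iff₀ hx1]
  set f : ℝ → ℝ := fun y => (y+1) * Real.log y - 2*(y-1) with hf
  have hmono : StrictMonoOn f (Set.Ici 1) := by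
    apply strictMonoOn_of_deriv_pos (convex_Ici 1)
    · apply ContinuousOn.sub
      · apply ContinuousOn.mul (by fun_prop)
        apply Real.continuousOn_log.mono
        intro y hy
        simp only [Set.mem_Ici] at hy
        simp only [Set.mem_compl_iff, Set.mem_singleton_iff]
        intro h; rw [h] at hy; linarith
      · fun_prop
    · intro y hy
      rw [interior_Ici] at hy
      have hy1 : 1 < y := hy
      have hy0 : (0:ℝ) < y := lt_trans one_pos hy1
      have hd : HasDerivAt f (Real.log y + 1/y - 1) y := by
        have h1 : HasDerivAt (fun z : ℝ => z + 1) 1 y := (hasDerivAt_id y).add_const 1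
        have h2 : HasDerivAt Real.log y⁻¹ y := Real.hasDerivAt_log (ne_of_gt hy0)
        have h3 := h1.mul h2
        have h4 : HasDerivAt (fun z : ℝ => 2*(z-1)) 2 y := by
          simpa using ((hasDerivAt_id y).sub_const 1).const_mul 2
        have h5 : HasDerivAt f _ y := h3.sub h4
        convert h5 using 1
        field_simp
        ring
      rw [hd.deriv]
      have := one_sub_inv_lt_log' hy1
      linarith
  have h2 : f 1 < f x := hmono (Set.mem_Ici.2 le_rfl) (Set.mem_Ici.2 (le_of_lt hx)) hx
  have h1 : f 1 = 0 := by simp [hf]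
  rw [h1] at h2
  have h3 : (0:ℝ) < (x+1) * Real.log x - 2*(x-1) := h2
  linarith

set_option maxHeartbeats 1000000 in
/-- For χ > 1 and λ ∈ (0,1], the CDMA self-interference coefficient ν₀(χ,λ)
    strictly exceeds the IR-UWB coefficient ν₅(χ,λ,1). -/
theorem nuZero_gt_nu5 (χ lam : ℝ) (hχ : 1 < χ) (hlam0 : 0 < lam) (hlam1 : lam ≤ 1) :
    (2 * χ * (χ ^ (2 * lam) - 1)
        - (χ ^ lam + lam + 3 * χ * lam - 1) * χ ^ lam * Real.log χ)
      / ((χ ^ lam - 1) ^ 2 * χ * Real.log χ)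
    < (χ + χ ^ lam - 2 * χ ^ (1 + lam)) / (χ - χ ^ (1 + lam)) := by
  have hχ0 : (0:ℝ) < χ := lt_trans one_pos hχ
  set L := Real.log χ with hLdef
  have hL0 : 0 < L := Real.log_pos hχ
  set a := χ ^ lam with hadef
  have ha1 : 1 < a := Real.one_lt_rpow_iff_of_pos hχ0 |>.2 (Or.inl ⟨hχ, hlam0⟩)
  have ha0 : (0:ℝ) < a := lt_trans one_pos ha1
  have haχ : a ≤ χ := by
    have h := Real.rpow_le_rpow_of_exponent_le (le_of_lt hχ) hlam1
    rwa [Real.rpow_one] at h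
  have hla : Real.log a = lam * L := Real.log_rpow hχ0 lam
  have e2 : χ ^ (2*lam) = a^2 := by
    rw [two_mul, Real.rpow_add hχ0, sq]
  have e3 : χ ^ (1+lam) = χ * a := by
    rw [Real.rpow_add hχ0, Real.rpow_one]
  rw [e2, e3]
  -- Padé bounds
  have pa : 2*(a-1)/(a+1) < lam * L := by rw [← hla]; exact pade_log ha1
  have pc : 2*(χ-1)/(χ+1) < L := pade_log hχ
  have hA : (0:ℝ) < a + 1 := by linarith
  have hX : (0:ℝ) < χ + 1 := by linarith
  have pa' : 2*(a-1) < lam * L * (a+1) := by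
    rw [div_lt_iff₀ hA] at pa; linarith
  have pc' : 2*(χ-1) < L * (χ+1) := by
    rw [div_lt_iff₀ hX] at pc; linarith
  -- polynomial positivity: P(a) = a²χ(χ-3) + a(2χ²+χ+1) - 2χ² > 0 for 1 ≤ a ≤ χ
  have Pg : 0 < a^2*(χ^2 - 3*χ) + a*(2*χ^2+χ+1) - 2*χ^2 := by
    nlinarith [sq_nonneg (χ-1), mul_nonneg (sub_nonneg.2 (le_of_lt ha1)) (sub_nonneg.2 haχ),
      mul_pos (sub_pos.2 ha1) (sub_pos.2 hχ), sq_nonneg (a-1), sq_nonneg (χ-a),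
      mul_nonneg (mul_nonneg (sub_nonneg.2 (le_of_lt ha1)) (sub_nonneg.2 haχ)) (sub_nonneg.2 (le_of_lt hχ)),
      mul_pos (mul_pos (sub_pos.2 hχ) (sub_pos.2 hχ)) (sub_pos.2 ha1),
      mul_pos ha0 hχ0]
  -- key inequality: F > 0
  have hc1 : (0:ℝ) < χ*(2*a-1)*(a-1) := mul_pos (mul_pos hχ0 (by linarith)) (by linarith)
  have hc2 : (0:ℝ) < (1+3*χ)*a := mul_pos (by linarith) ha0
  have key : 0 < L*(2*χ*a^2 + χ - 3*χ*a) + (1+3*χ)*a*(lam*L) - 2*χ*(a^2-1) := by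
    have t1 : 2*(χ-1) * (χ*(2*a-1)*(a-1)) < L*(χ+1) * (χ*(2*a-1)*(a-1)) :=
      mul_lt_mul_of_pos_right pc' hc1
    have t2 : 2*(a-1) * ((1+3*χ)*a) < lam * L * (a+1) * ((1+3*χ)*a) :=
      mul_lt_mul_of_pos_right pa' hc2
    have t3 : 0 < (a-1) * (a^2*(χ^2 - 3*χ) + a*(2*χ^2+χ+1) - 2*χ^2) :=
      mul_pos (sub_pos.2 ha1) Pg
    nlinarith [mul_pos hA hX, mul_lt_mul_of_pos_right t1 hA, mul_lt_mul_of_pos_right t2 hX, t3]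
  -- rewrite RHS with positive denominator
  have hd2 : 0 < χ * a - χ := by nlinarith [mul_pos hχ0 (sub_pos.2 ha1)]
  have hd1 : 0 < (a-1)^2 * χ * L := mul_pos (mul_pos (pow_pos (by linarith) 2) hχ0) hL0
  have hrw : (χ + a - 2*(χ*a)) / (χ - χ*a) = (2*(χ*a) - χ - a) / (χ*a - χ) := by
    rw [← neg_div_neg_eq]; ring_nf
  rw [hrw, div_lt_div_iff₀ hd1 hd2]
  have hmul := mul_pos (mul_pos hχ0 (sub_pos.2 ha1)) key
  nlinarith [hmul]
end
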